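/- Let p be a prime and F = ZMod p. Fix a ∈ F, a multiplicative character χ of F (extended by χ(0) := 1), with a ≠ 0 or χ nontrivial. There is a bound o_{p→∞}(1), uniform over such (a, χ), for the equidistribution average: for every ξ = (ξ₁, ξ₂, ξ₃) ∈ ℤ³ such that NOT (ξ₁ a = 0 in F, ξ₂ a = 0 in F, and χ^{ξ₃} is trivial), one has |(1/p) ∑_{x ∈ F} e_p(ξ₁ a x² + 2 ξ₂ a x) · χ(x)^{ξ₃}| ≤ C p^{−c} for absolute constants C, c > 0; while if ξ₁ a = 0, ξ₂ a = 0 and χ^{ξ₃} = 1 then the average equals 1. -/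

import Mathlib

open Finset Complex

/-- The additive character `e_p(t) = exp(2πi t / p)`. -/
noncomputable def ep (p : ℕ) (t : ZMod p) : ℂ :=
  Complex.exp (2 * Real.pi * Complex.I * (t.val : ℂ) / (p : ℂ))

/-!
With `η = χ ^ ξ₃`, a genuine multiplicative character (so `η 0 = 0`), the sum is `1 + T` where
`T = ∑ₓ ψ(αx² + βx) η(x)`. If `α = β = 0`, then `T = ∑ η` vanishes unless `η = 1`. Otherwise the
substitution `x = t y` in `|T|² = ∑_{x,y}` gives
`|T|² = ∑ₜ η(t) ∑_{y ≠ 0} ψ(α(t² - 1) y² + β(t - 1) y)`, and for `t ≠ ±1` the inner sum is a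
nondegenerate quadratic Gauss sum minus one term, hence of size at most `√p + 1`. So
`|T|² ≤ 4 p^{3/2}` and the average is at most `3 p^{-1/4}`; for `p = 2` the trivial bound suffices.
-/

open ComplexConjugate

section FiniteField

variable {F : Type*} [Field F] [Fintype F]

namespace MulChar

lemma norm_apply_of_ne_zero (η : MulChar F ℂ) {x : F} (hx : x ≠ 0) : ‖η x‖ = 1 :=
  Complex.norm_eq_one_of_pow_eq_one
    (by rw [← map_pow, FiniteField.pow_card_sub_one_eq_one x hx, η.map_one])
    (Nat.sub_ne_zero_of_lt Fintype.one_lt_card)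

lemma norm_apply_le_one (η : MulChar F ℂ) (x : F) : ‖η x‖ ≤ 1 := by
  rcases eq_or_ne x 0 with rfl | hx
  · simp
  · exact (η.norm_apply_of_ne_zero hx).le

lemma apply_mul_conj_apply (η : MulChar F ℂ) {x : F} (hx : x ≠ 0) :
    η x * conj (η x) = 1 := by
  rw [mul_conj', η.norm_apply_of_ne_zero hx]
  norm_num

omit [Fintype F] in
lemma zpow_apply_of_ne_zero (χ : MulChar F ℂ) (n : ℤ) {x : F} (hx : x ≠ 0) :
    (χ ^ n) x = χ x ^ n := by
  obtain ⟨m, rfl | rfl⟩ := Int.eq_nat_or_neg n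
  · simpa using χ.pow_apply_coe m (Units.mk0 x hx)
  · simpa [inv_apply_eq_inv'] using χ.pow_apply_coe m (Units.mk0 x hx)

omit [Fintype F] in
lemma apply_zpow_eq_one_of_zpow_eq_one {χ : MulChar F ℂ} {n : ℤ} (h : χ ^ n = 1) {x : F}
    (hx : x ≠ 0) : χ x ^ n = 1 := by
  rw [← χ.zpow_apply_of_ne_zero n hx, h, one_apply (isUnit_iff_ne_zero.2 hx)]

end MulChar

theorem sum_mul_mulChar_mul_conj [DecidableEq F] (g : F → ℂ) (η : MulChar F ℂ) :
    (∑ x, g x * η x) * conj (∑ x, g x * η x) =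
      ∑ t, η t * ∑ y ∈ univ.erase 0, g (t * y) * conj (g y) := by
  have substitute : ∀ y ∈ univ.erase (0 : F),
      ∑ t, η t * (g (t * y) * conj (g y)) = ∑ x, g x * η x * conj (g y * η y) := by
    intro y hy
    have hy0 := (mem_erase.1 hy).1
    refine Fintype.sum_equiv (Equiv.mulRight₀ y hy0) _ _ fun t => ?_
    simp only [Equiv.mulRight₀_apply, map_mul]
    linear_combination (-(η t * g (t * y) * conj (g y))) * η.apply_mul_conj_apply hy0
  calc (∑ x, g x * η x) * conj (∑ x, g x * η x)
      = ∑ y, ∑ x, g x * η x * conj (g y * η y) := by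
        rw [map_sum, sum_mul_sum, sum_comm]
    _ = ∑ y ∈ univ.erase 0, ∑ x, g x * η x * conj (g y * η y) := by
        rw [← add_sum_erase _ _ (mem_univ 0)]
        simp only [η.map_zero, mul_zero, map_zero, sum_const_zero, zero_add]
    _ = ∑ y ∈ univ.erase 0, ∑ t, η t * (g (t * y) * conj (g y)) :=
        (sum_congr rfl substitute).symm
    _ = _ := by
        rw [sum_comm]
        simp_rw [mul_sum]

theorem norm_sq_sum_addChar_quadratic {ψ : AddChar F ℂ} (hψ : ψ.IsPrimitive)
    (hF : ringChar F ≠ 2) {A : F} (hA : A ≠ 0) (B : F) :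
    ‖∑ y, ψ (A * y ^ 2 + B * y)‖ ^ 2 = Fintype.card F := by
  classical
  have shift : ∀ z h : F, ψ (A * (h + z) ^ 2 + B * (h + z)) * conj (ψ (A * z ^ 2 + B * z)) =
      ψ (A * h ^ 2 + B * h) * ψ (z * (2 * A * h)) := by
    intro z h
    rw [← AddChar.map_neg_eq_conj, ← AddChar.map_add_eq_mul, ← AddChar.map_add_eq_mul]
    ring_nf
  have h2A : ∀ h : F, 2 * A * h = 0 ↔ h = 0 := by
    simp [Ring.two_ne_zero hF, hA]
  have key : (∑ y, ψ (A * y ^ 2 + B * y)) * conj (∑ y, ψ (A * y ^ 2 + B * y)) =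
      Fintype.card F := by
    calc _ = ∑ z, ∑ y, ψ (A * y ^ 2 + B * y) * conj (ψ (A * z ^ 2 + B * z)) := by
          rw [map_sum, sum_mul_sum, sum_comm]
      _ = ∑ z, ∑ h, ψ (A * h ^ 2 + B * h) * ψ (z * (2 * A * h)) := by
          refine sum_congr rfl fun z _ => ?_
          exact (Fintype.sum_equiv (Equiv.addRight z) _ _ fun h => (shift z h).symm).symm
      _ = ∑ h, ψ (A * h ^ 2 + B * h) * ∑ z, ψ (z * (2 * A * h)) := by
          rw [sum_comm]
          simp_rw [mul_sum]
      _ = Fintype.card F := by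
          simp_rw [AddChar.sum_mulShift _ hψ, h2A]
          simp
  rw [mul_conj'] at key
  exact_mod_cast key

theorem norm_sum_addChar_quadratic_le {ψ : AddChar F ℂ} (hψ : ψ.IsPrimitive)
    (hF : ringChar F ≠ 2) {A B : F} (hAB : A ≠ 0 ∨ B ≠ 0) :
    ‖∑ y, ψ (A * y ^ 2 + B * y)‖ ≤ √(Fintype.card F) := by
  classical
  rcases eq_or_ne A 0 with rfl | hA
  · have hB := hAB.resolve_left (not_not.2 rfl)
    simp_rw [zero_mul, zero_add, mul_comm B, AddChar.sum_mulShift _ hψ, if_neg hB]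
    simp
  · rw [Real.le_sqrt (norm_nonneg _) (Nat.cast_nonneg _), norm_sq_sum_addChar_quadratic hψ hF hA]

theorem norm_sum_erase_zero_addChar_quadratic_le [DecidableEq F] {ψ : AddChar F ℂ}
    (hψ : ψ.IsPrimitive) (hF : ringChar F ≠ 2) {A B : F} (hAB : A ≠ 0 ∨ B ≠ 0) :
    ‖∑ y ∈ univ.erase 0, ψ (A * y ^ 2 + B * y)‖ ≤ √(Fintype.card F) + 1 := by
  rw [sum_erase_eq_sub (mem_univ 0)]
  refine (norm_sub_le _ _).trans ?_
  simpa using norm_sum_addChar_quadratic_le hψ hF hAB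

lemma norm_sum_le_card_of_norm_le_one {ι E : Type*} [Fintype ι] [SeminormedAddCommGroup E]
    {g : ι → E} (hg : ∀ x, ‖g x‖ ≤ 1) (s : Finset ι) : ‖∑ x ∈ s, g x‖ ≤ Fintype.card ι :=
  calc ‖∑ x ∈ s, g x‖ ≤ ∑ _x ∈ s, (1 : ℝ) := norm_sum_le_of_le s fun x _ => hg x
    _ ≤ Fintype.card ι := by simpa using card_le_univ s

omit [Fintype F] in
lemma eq_one_or_eq_neg_one_of_mul_sub_one_eq_zero {α β t : F} (hαβ : α ≠ 0 ∨ β ≠ 0)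
    (hα : α * (t ^ 2 - 1) = 0) (hβ : β * (t - 1) = 0) : t = 1 ∨ t = -1 := by
  rcases hαβ with hα0 | hβ0
  · exact sq_eq_one_iff.1 (sub_eq_zero.1 ((mul_eq_zero.1 hα).resolve_left hα0))
  · exact .inl (sub_eq_zero.1 ((mul_eq_zero.1 hβ).resolve_left hβ0))

theorem norm_sq_sum_addChar_quadratic_mulChar_le {ψ : AddChar F ℂ} (hψ : ψ.IsPrimitive)
    (hF : ringChar F ≠ 2) (η : MulChar F ℂ) {α β : F} (hαβ : α ≠ 0 ∨ β ≠ 0) :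
    ‖∑ x, ψ (α * x ^ 2 + β * x) * η x‖ ^ 2 ≤
      4 * Fintype.card F * √(Fintype.card F) := by
  classical
  set q : ℝ := (Fintype.card F : ℝ)
  set I : F → ℂ := fun t => ∑ y ∈ univ.erase 0, ψ (α * (t ^ 2 - 1) * y ^ 2 + β * (t - 1) * y)
  have differencing :
      ((‖∑ x, ψ (α * x ^ 2 + β * x) * η x‖ ^ 2 : ℝ) : ℂ) = ∑ t, η t * I t := by
    push_cast
    rw [← mul_conj', sum_mul_mulChar_mul_conj]
    refine sum_congr rfl fun t _ => congrArg _ (sum_congr rfl fun y _ => ?_)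
    rw [← AddChar.map_neg_eq_conj, ← AddChar.map_add_eq_mul]
    ring_nf
  have hI : ∀ t, ‖η t * I t‖ ≤ (√q + 1) + if t ∈ ({1, -1} : Finset F) then q else 0 := by
    intro t
    grw [norm_mul, η.norm_apply_le_one t, one_mul]
    split_ifs with ht
    · have := norm_sum_le_card_of_norm_le_one (fun y => (ψ.norm_apply
        (α * (t ^ 2 - 1) * y ^ 2 + β * (t - 1) * y)).le) (univ.erase 0)
      linarith [Real.sqrt_nonneg q]
    · rw [add_zero]
      refine norm_sum_erase_zero_addChar_quadratic_le hψ hF (not_and_or.1 fun h => ht ?_)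
      simpa using eq_one_or_eq_neg_one_of_mul_sub_one_eq_zero hαβ h.1 h.2
  have hq : 1 ≤ q := Nat.one_le_cast.2 Fintype.card_pos
  have hsqrt : 1 ≤ √q := Real.one_le_sqrt.2 hq
  calc ‖∑ x, ψ (α * x ^ 2 + β * x) * η x‖ ^ 2 = ‖∑ t, η t * I t‖ := by
        rw [← differencing, Complex.norm_real, Real.norm_of_nonneg (by positivity)]
    _ ≤ ∑ t, ((√q + 1) + if t ∈ ({1, -1} : Finset F) then q else 0) :=
        norm_sum_le_of_le _ fun t _ => hI t
    _ = q * (√q + 1) + #({1, -1} : Finset F) * q := by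
        rw [sum_add_distrib, sum_ite_mem, univ_inter]
        simp only [sum_const, card_univ, nsmul_eq_mul]
        ring
    _ ≤ q * (√q + 1) + 2 * q := by
        gcongr
        exact_mod_cast card_le_two
    _ ≤ 4 * q * √q := by nlinarith [mul_le_mul_of_nonneg_left hsqrt (zero_le_one.trans hq)]

lemma rpow_three_div_four_sq {q : ℝ} (hq : 0 ≤ q) : (q ^ (3 / 4 : ℝ)) ^ 2 = q * √q := by
  rw [← Real.rpow_natCast, ← Real.rpow_mul hq, Real.sqrt_eq_rpow,
    ← Real.rpow_one_add' hq (by norm_num)]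
  norm_num

theorem norm_sum_addChar_quadratic_mulChar_le {ψ : AddChar F ℂ} (hψ : ψ.IsPrimitive)
    (hF : ringChar F ≠ 2) (η : MulChar F ℂ) {α β : F} (h : ¬(α = 0 ∧ β = 0 ∧ η = 1)) :
    ‖∑ x, ψ (α * x ^ 2 + β * x) * η x‖ ≤ 2 * (Fintype.card F : ℝ) ^ (3 / 4 : ℝ) := by
  by_cases hαβ : α = 0 ∧ β = 0
  · obtain ⟨rfl, rfl⟩ := hαβ
    simp only [zero_mul, add_zero, AddChar.map_zero_eq_one, one_mul,
      MulChar.sum_eq_zero_of_ne_one fun hη => h ⟨rfl, rfl, hη⟩, norm_zero]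
    positivity
  · refine (pow_le_pow_iff_left₀ (norm_nonneg _) (by positivity) two_ne_zero).1 ?_
    rw [mul_pow, rpow_three_div_four_sq (Nat.cast_nonneg _)]
    linarith [norm_sq_sum_addChar_quadratic_mulChar_le hψ hF η (not_and_or.1 hαβ)]

end FiniteField

lemma one_add_two_mul_rpow_div_le {q : ℝ} (hq : 1 ≤ q) :
    (1 + 2 * q ^ (3 / 4 : ℝ)) / q ≤ 3 * q ^ (-(1 / 4) : ℝ) := by
  have h₁ : 1 ≤ q ^ (3 / 4 : ℝ) := Real.one_le_rpow hq (by norm_num)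
  have h₂ : q ^ (3 / 4 : ℝ) = q ^ (-(1 / 4) : ℝ) * q := by
    rw [← Real.rpow_add_one (by positivity)]
    norm_num
  rw [div_le_iff₀ (by positivity)]
  linarith

lemma ep_eq_stdAddChar {p : ℕ} [NeZero p] (t : ZMod p) : ep p t = ZMod.stdAddChar t := by
  conv_rhs => rw [← ZMod.natCast_zmod_val t, ← Int.cast_natCast, ZMod.stdAddChar_coe]
  simp [ep]

lemma sum_ep_mul_ite_zpow {p : ℕ} [Fact p.Prime] (α β : ZMod p) (χ : MulChar (ZMod p) ℂ)
    (n : ℤ) :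
    ∑ x, ep p (α * x ^ 2 + β * x) * (if x = 0 then 1 else χ x) ^ n =
      1 + ∑ x, ZMod.stdAddChar (α * x ^ 2 + β * x) * (χ ^ n) x := by
  have split : ∀ x : ZMod p, ep p (α * x ^ 2 + β * x) * (if x = 0 then 1 else χ x) ^ n =
      (if x = 0 then 1 else 0) + ZMod.stdAddChar (α * x ^ 2 + β * x) * (χ ^ n) x := by
    intro x
    rcases eq_or_ne x 0 with rfl | hx
    · simp [ep_eq_stdAddChar, MulChar.map_zero]
    · simp [hx, ep_eq_stdAddChar, MulChar.zpow_apply_of_ne_zero _ _ hx]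
  simp_rw [split, sum_add_distrib, sum_ite_eq', if_pos (mem_univ _)]

theorem stmt19 : ∃ C : ℝ, 0 < C ∧ ∃ c : ℝ, 0 < c ∧
    ∀ (p : ℕ) [Fact p.Prime] (a : ZMod p) (χ : MulChar (ZMod p) ℂ),
      (a ≠ 0 ∨ χ ≠ 1) →
      ∀ ξ₁ ξ₂ ξ₃ : ℤ,
        (¬((ξ₁ : ZMod p) * a = 0 ∧ (ξ₂ : ZMod p) * a = 0 ∧
            (∀ x : ZMod p, x ≠ 0 → (χ x) ^ ξ₃ = 1)) →
          ‖(1 / (p : ℂ)) * ∑ x : ZMod p,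
              ep p ((ξ₁ : ZMod p) * a * x ^ 2 + 2 * (ξ₂ : ZMod p) * a * x) *
                (if x = 0 then 1 else χ x) ^ ξ₃‖ ≤ C * (p : ℝ) ^ (-c)) ∧
        (((ξ₁ : ZMod p) * a = 0 ∧ (ξ₂ : ZMod p) * a = 0 ∧
            (∀ x : ZMod p, x ≠ 0 → (χ x) ^ ξ₃ = 1)) →
          (1 / (p : ℂ)) * ∑ x : ZMod p,
              ep p ((ξ₁ : ZMod p) * a * x ^ 2 + 2 * (ξ₂ : ZMod p) * a * x) *
                (if x = 0 then 1 else χ x) ^ ξ₃ = 1) := by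
  refine ⟨3, by norm_num, 1 / 4, by norm_num, fun p _ a χ _ ξ₁ ξ₂ ξ₃ =>
    ⟨fun hne => ?_, fun ⟨h₁, h₂, h₃⟩ => ?_⟩⟩
  · have hp : (1 : ℝ) ≤ p := Nat.one_le_cast.2 (Fact.out : p.Prime).one_lt.le
    have hT : ‖∑ x, ZMod.stdAddChar ((ξ₁ : ZMod p) * a * x ^ 2 + 2 * (ξ₂ : ZMod p) * a * x) *
        (χ ^ ξ₃) x‖ ≤ 2 * (p : ℝ) ^ (3 / 4 : ℝ) := by
      rcases eq_or_ne p 2 with rfl | hp2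
      · refine (norm_sum_le_card_of_norm_le_one (fun x => ?_) univ).trans ?_
        · simpa [AddChar.norm_apply] using (χ ^ ξ₃).norm_apply_le_one x
        · simpa using Real.one_le_rpow hp (by norm_num : (0 : ℝ) ≤ 3 / 4)
      · have hchar : ringChar (ZMod p) ≠ 2 := by rwa [ZMod.ringChar_zmod_n]
        simpa [ZMod.card] using norm_sum_addChar_quadratic_mulChar_le
          (ZMod.isPrimitive_stdAddChar p) hchar (χ ^ ξ₃) fun ⟨hα, hβ, hη⟩ => hne
            ⟨hα, by simpa [Ring.two_ne_zero hchar, mul_assoc] using hβ,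
              fun _ => MulChar.apply_zpow_eq_one_of_zpow_eq_one hη⟩
    rw [sum_ep_mul_ite_zpow, norm_mul, norm_div, norm_one, Complex.norm_natCast,
      one_div_mul_eq_div]
    calc _ ≤ (1 + 2 * (p : ℝ) ^ (3 / 4 : ℝ)) / p := by
          gcongr
          exact (norm_add_le _ _).trans (by rw [norm_one]; linarith)
      _ ≤ 3 * (p : ℝ) ^ (-(1 / 4) : ℝ) := one_add_two_mul_rpow_div_le hp
  · have hterm : ∀ x : ZMod p, ep p ((ξ₁ : ZMod p) * a * x ^ 2 + 2 * (ξ₂ : ZMod p) * a * x) *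
        (if x = 0 then 1 else χ x) ^ ξ₃ = 1 := by
      intro x
      rcases eq_or_ne x 0 with rfl | hx
      · simp [ep]
      · simp [ep, h₁, mul_assoc, h₂, hx, h₃ x hx]
    rw [sum_congr rfl fun x _ => hterm x]
    simp
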